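/- arXiv:1708.00599 — 2 statements merged into one kernel-verified Lean document; each statement's English description precedes it below -/
import Mathlib

section
/- For every integer j with 0 ≤ j ≤ r−1 one has ∑_{ν=1}^{p} ∑_{i=1}^{ρ} w_i · ((ν−1+μ_i)/p)^j · Ψ((ν−1+μ_i)/p) = 0. -/
open Set

noncomputable section

/-- Supremum of `|x|` over `[a, b]`. -/
def supIcc (a b : ℝ) (x : ℝ → ℝ) : ℝ := ⨆ t : Set.Icc a b, |x t.1|

/-- `x` is bounded on `[a, b]`. -/
def BddIcc (a b : ℝ) (x : ℝ → ℝ) : Prop := ∃ M, ∀ t ∈ Set.Icc a b, |x t| ≤ M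

/-- The quadrature rule `(w, μ)` on `[0,1]` has degree of precision at least `k`:
it integrates exactly all polynomials of degree at most `k`. -/
def Precision {ρ : ℕ} (w μ : Fin ρ → ℝ) (k : ℕ) : Prop :=
  ∀ P : Polynomial ℝ, P.natDegree ≤ k →
    ∑ i, w i * P.eval (μ i) = ∫ t in (0:ℝ)..1, P.eval t

/-- `Ψ(t) = ∏ i (t - q i)`. -/
def Psi {r : ℕ} (q : Fin r → ℝ) (t : ℝ) : ℝ := ∏ i, (t - q i)

/-- `q` lists the Gauss points of order `r` in `(0,1)`. -/
def GaussPts {r : ℕ} (q : Fin r → ℝ) : Prop :=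
  StrictMono q ∧ (∀ i, q i ∈ Set.Ioo (0:ℝ) 1) ∧
    ∀ j, j < r → ∫ t in (0:ℝ)..1, t ^ j * Psi q t = 0

/-- Quadrature nodes `ζ_i^{j+1}` of the composite rule, `j = 0, …, m-1`. -/
def qNode {ρ : ℕ} (a b : ℝ) (μ : Fin ρ → ℝ) (m j : ℕ) (i : Fin ρ) : ℝ :=
  a + (j : ℝ) * ((b - a) / m) + μ i * ((b - a) / m)

/-- Nyström operator, linear kernel. -/
def nystL {ρ : ℕ} (a b : ℝ) (w μ : Fin ρ → ℝ) (m : ℕ) (κ : ℝ → ℝ → ℝ) (x : ℝ → ℝ) :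
    ℝ → ℝ := fun s =>
  ((b - a) / m) *
    ∑ j ∈ Finset.range m, ∑ i, w i * κ s (qNode a b μ m j i) * x (qNode a b μ m j i)

/-- Nyström operator, Urysohn kernel. -/
def nystU {ρ : ℕ} (a b : ℝ) (w μ : Fin ρ → ℝ) (m : ℕ) (κ : ℝ → ℝ → ℝ → ℝ) (x : ℝ → ℝ) :
    ℝ → ℝ := fun s =>
  ((b - a) / m) *
    ∑ j ∈ Finset.range m, ∑ i, w i * κ s (qNode a b μ m j i) (x (qNode a b μ m j i))

/-- Fréchet derivative `K_m'(x) v` of the Nyström operator. -/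
def nystU' {ρ : ℕ} (a b : ℝ) (w μ : Fin ρ → ℝ) (m : ℕ) (κ : ℝ → ℝ → ℝ → ℝ) (x v : ℝ → ℝ) :
    ℝ → ℝ := fun s =>
  ((b - a) / m) *
    ∑ j ∈ Finset.range m, ∑ i,
      w i * deriv (κ s (qNode a b μ m j i)) (x (qNode a b μ m j i)) * v (qNode a b μ m j i)

/-- Collocation nodes `τ_i^{k+1}`, `k = 0, …, n-1`. -/
def cNode {r : ℕ} (a b : ℝ) (q : Fin r → ℝ) (n k : ℕ) (i : Fin r) : ℝ :=
  a + (k : ℝ) * ((b - a) / n) + q i * ((b - a) / n)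

/-- Index of the subinterval of the uniform partition of `[a,b]` containing `t`. -/
def iIdx (a b : ℝ) (n : ℕ) (t : ℝ) : ℕ :=
  min (n - 1) (⌊(t - a) / ((b - a) / n)⌋.toNat)

/-- Piecewise-polynomial interpolatory projection at the `r` Gauss points of each
subinterval of the uniform partition of `[a,b]` into `n` parts. -/
def projQ {r : ℕ} (a b : ℝ) (q : Fin r → ℝ) (n : ℕ) (x : ℝ → ℝ) : ℝ → ℝ := fun t =>
  (Lagrange.interpolate Finset.univ (cNode a b q n (iIdx a b n t))
    fun i => x (cNode a b q n (iIdx a b n t) i)).eval t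

/-- Discrete modified projection operator, linear case. -/
def modL {ρ r : ℕ} (a b : ℝ) (w μ : Fin ρ → ℝ) (q : Fin r → ℝ) (n m : ℕ)
    (κ : ℝ → ℝ → ℝ) (x : ℝ → ℝ) : ℝ → ℝ :=
  projQ a b q n (nystL a b w μ m κ x) + nystL a b w μ m κ (projQ a b q n x)
    - projQ a b q n (nystL a b w μ m κ (projQ a b q n x))

/-- Discrete modified projection operator, Urysohn case. -/
def modU {ρ r : ℕ} (a b : ℝ) (w μ : Fin ρ → ℝ) (q : Fin r → ℝ) (n m : ℕ)
    (κ : ℝ → ℝ → ℝ → ℝ) (x : ℝ → ℝ) : ℝ → ℝ :=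
  projQ a b q n (nystU a b w μ m κ x) + nystU a b w μ m κ (projQ a b q n x)
    - projQ a b q n (nystU a b w μ m κ (projQ a b q n x))

/-- Fréchet derivative of `modU` at `x`, applied to `v`. -/
def modU' {ρ r : ℕ} (a b : ℝ) (w μ : Fin ρ → ℝ) (q : Fin r → ℝ) (n m : ℕ)
    (κ : ℝ → ℝ → ℝ → ℝ) (x v : ℝ → ℝ) : ℝ → ℝ :=
  projQ a b q n (nystU' a b w μ m κ x v)
    + nystU' a b w μ m κ (projQ a b q n x) (projQ a b q n v)
    - projQ a b q n (nystU' a b w μ m κ (projQ a b q n x) (projQ a b q n v))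

/-- `‖x‖_{k,∞}`. -/
def CkNorm (a b : ℝ) (k : ℕ) (x : ℝ → ℝ) : ℝ :=
  ⨆ p : Fin (k + 1) × Set.Icc a b, |iteratedDeriv (p.1 : ℕ) x p.2.1|

/-- Mixed partial derivative `∂^{i+j} κ / ∂s^i ∂t^j`. -/
def pder (i j : ℕ) (κ : ℝ → ℝ → ℝ) (s t : ℝ) : ℝ :=
  iteratedDeriv i (fun s' => iteratedDeriv j (κ s') t) s

/-- `‖κ‖_{k,∞}`. -/
def kerNorm (a b : ℝ) (k : ℕ) (κ : ℝ → ℝ → ℝ) : ℝ :=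
  ⨆ p : {ij : ℕ × ℕ // ij.1 + ij.2 ≤ k} × (Set.Icc a b × Set.Icc a b),
    |pder p.1.1.1 p.1.1.2 κ p.2.1.1 p.2.2.1|

/-- `W = ∑ |w i|`. -/
def Wsum {ρ : ℕ} (w : Fin ρ → ℝ) : ℝ := ∑ i, |w i|

/-- `∂κ/∂u`, Urysohn kernel. -/
def du (κ : ℝ → ℝ → ℝ → ℝ) (s t u : ℝ) : ℝ := deriv (κ s t) u

/-- `∂²κ/∂u²`, Urysohn kernel. -/
def du2 (κ : ℝ → ℝ → ℝ → ℝ) (s t u : ℝ) : ℝ := deriv (deriv (κ s t)) u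

/-- supremum of `|g(s,t,u)|` over `s, t ∈ [a,b]`, `|u| ≤ B`. -/
def supU (a b B : ℝ) (g : ℝ → ℝ → ℝ → ℝ) : ℝ :=
  ⨆ v : Set.Icc a b × Set.Icc a b × Set.Icc (-B) B, |g v.1.1 v.2.1.1 v.2.2.1|

/-- `∂κ/∂u` exists everywhere and is continuous. -/
def Smooth1 (κ : ℝ → ℝ → ℝ → ℝ) : Prop :=
  (∀ s t : ℝ, Differentiable ℝ (κ s t)) ∧
    Continuous fun v : ℝ × ℝ × ℝ => du κ v.1 v.2.1 v.2.2

/-- `∂²κ/∂u²` exists everywhere and is continuous. -/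
def Smooth2 (κ : ℝ → ℝ → ℝ → ℝ) : Prop :=
  (∀ s t : ℝ, Differentiable ℝ (deriv (κ s t))) ∧
    Continuous fun v : ℝ × ℝ × ℝ => du2 κ v.1 v.2.1 v.2.2

/-!
A rule exact for polynomials of degree `≤ k` on `[0,1]` stays exact for them, after the affine
change of variables, on every cell of a uniform partition; summing over the cells, the composite
rule integrates such polynomials exactly over the whole interval. Since `t ^ j * Ψ t` has degree
`j + r ≤ 2r - 1`, the composite sum is `p` times `∫₀¹ t ^ j Ψ t`, which vanishes by the defining
orthogonality of the Gauss points.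
-/

open Polynomial

namespace Precision

variable {ρ k : ℕ} {w μ : Fin ρ → ℝ}

theorem mul_sum_eval_mul_add (h : Precision w μ k) {P : ℝ[X]} (hP : P.natDegree ≤ k)
    (c d : ℝ) :
    c * ∑ i, w i * P.eval (c * μ i + d) = ∫ x in d..c + d, P.eval x := by
  have hdeg : (P.comp (C c * X + C d)).natDegree ≤ k :=
    natDegree_comp_le.trans <| by
      simpa using Nat.mul_le_mul hP (natDegree_linear_le (a := c) (b := d))
  have hexact := h _ hdeg
  simp only [eval_comp, eval_add, eval_mul, eval_C, eval_X] at hexact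
  rw [hexact, ← smul_eq_mul,
    intervalIntegral.smul_integral_comp_mul_add (f := fun x => P.eval x)]
  simp

theorem mul_sum_range_sum_eval_qNode (h : Precision w μ k) {P : ℝ[X]} (hP : P.natDegree ≤ k)
    (a b : ℝ) {m : ℕ} (hm : m ≠ 0) :
    (b - a) / m * ∑ ν ∈ Finset.range m, ∑ i, w i * P.eval (qNode a b μ m ν i) =
      ∫ x in a..b, P.eval x := by
  set δ := (b - a) / m with hδ
  have hcell (ν : ℕ) : δ * ∑ i, w i * P.eval (qNode a b μ m ν i) =
      ∫ x in a + ν * δ..a + (ν + 1 : ℕ) * δ, P.eval x := by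
    have hnode (i : Fin ρ) : qNode a b μ m ν i = δ * μ i + (a + ν * δ) := by
      rw [qNode, ← hδ]; ring
    have hend : a + (ν + 1 : ℕ) * δ = δ + (a + ν * δ) := by push_cast; ring
    simp only [hnode, hend]
    exact h.mul_sum_eval_mul_add hP δ (a + ν * δ)
  have hend : a + (m : ℕ) * δ = b := by rw [hδ]; field_simp; ring
  rw [Finset.mul_sum, Finset.sum_congr rfl fun ν _ => hcell ν,
    intervalIntegral.sum_integral_adjacent_intervals (a := fun ν : ℕ => a + ν * δ)
      fun _ _ => P.continuous.intervalIntegrable _ _, hend]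
  simp

end Precision

theorem Psi_eq_eval {r : ℕ} (q : Fin r → ℝ) (t : ℝ) :
    Psi q t = (∏ i, (X - C (q i))).eval t := by
  simp [Psi, eval_prod]

theorem stmt0_general {ρ r : ℕ} (hr : 1 ≤ r) (w μ : Fin ρ → ℝ)
    (hprec : Precision w μ (2 * r - 1))
    (q : Fin r → ℝ) (hq : GaussPts q) (p : ℕ) (hp : 1 ≤ p)
    (j : ℕ) (hj : j ≤ r - 1) :
    ∑ ν ∈ Finset.range p, ∑ i, w i * (((ν : ℝ) + μ i) / p) ^ j *
      Psi q (((ν : ℝ) + μ i) / p) = 0 := by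
  obtain ⟨-, -, horthogonal⟩ := hq
  set Q : ℝ[X] := X ^ j * ∏ i, (X - C (q i))
  have hQ (t : ℝ) : Q.eval t = t ^ j * Psi q t := by simp [Q, Psi_eq_eval]
  have hdeg : Q.natDegree ≤ 2 * r - 1 := by
    refine natDegree_mul_le.trans ?_
    simp only [natDegree_X_pow, natDegree_finsetProd_X_sub_C_eq_card, Finset.card_univ,
      Fintype.card_fin]
    omega
  have hp0 : p ≠ 0 := by omega
  have hcomposite := hprec.mul_sum_range_sum_eval_qNode hdeg 0 1 hp0
  simp only [hQ, horthogonal j (by omega), qNode] at hcomposite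
  have hnodes (ν : ℕ) (i : Fin ρ) : 0 + ν * ((1 - 0) / p) + μ i * ((1 - 0) / p) =
      ((ν : ℝ) + μ i) / p := by ring
  simp only [hnodes, ← mul_assoc] at hcomposite
  exact (mul_eq_zero.mp hcomposite).resolve_left (by simpa using hp0)

/-- Lemma 3.1: the discrete orthogonality relation for the composite
quadrature rule and the Gauss-points polynomial `Ψ`. -/
theorem stmt0 {ρ r : ℕ} (hr : 1 ≤ r) (w μ : Fin ρ → ℝ)
    (hμ : ∀ i, μ i ∈ Set.Ioo (0:ℝ) 1) (hprec : Precision w μ (2 * r - 1))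
    (q : Fin r → ℝ) (hq : GaussPts q) (p : ℕ) (hp : 1 ≤ p)
    (j : ℕ) (hj : j ≤ r - 1) :
    ∑ ν ∈ Finset.range p, ∑ i, w i * (((ν : ℝ) + μ i) / p) ^ j *
      Psi q (((ν : ℝ) + μ i) / p) = 0 :=
  stmt0_general hr w μ hprec q hq p hp j hj
end
end

section
/- Assume ∂κ/∂u and ∂²κ/∂u² exist and are continuous on Ω, let f ∈ C[a,b], and let φ ∈ C[a,b] solve x − K(x) = f. Fix an integer p ≥ 1 and set m = n·p. Suppose there exist an integer m₁ and a constant C₇ such that for every m ≥ m₁ the operator I − K_m'(φ) is bijective on the Banach space of all bounded functions [a,b] → ℝ with the supremum norm and ‖(I − K_m'(φ))^{−1}‖ ≤ C₇. Then there exists an integer n₁ such that for every n ≥ n₁ with n·p ≥ m₁, the operator I − (K̃_n^M)'(φ) is bijective on that space and ‖(I − (K̃_n^M)'(φ))^{−1}‖ ≤ 2·C₇. -/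
open Set

noncomputable section

/-!
Write `K' = K_m'(φ)`, `K̃' = (K̃_n^M)'(φ)` and `m = n p`. Then
`K̃' - K' = (Q_n - I) K_m'(φ) - (Q_n - I) K_m'(Q_n φ) Q_n`. The functions `K_m'(x) v` depend on `s`
only through `∂κ/∂u`, so for bounded `x`, `v` they are equicontinuous in `s` uniformly in `m`;
since `Q_n` interpolates at the Gauss points with a Lebesgue constant independent of `n`, the
interpolation errors give `‖K̃' - K'‖ ≤ 1 / (2 C₇)` for large `n`. Then
`‖v‖ ≤ C₇ ‖(I - K')v‖ ≤ C₇ ‖(I - K̃')v‖ + ‖v‖ / 2`. Finally `K̃'` only reads its argument at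
finitely many nodes, so `I - K̃'` reduces to a linear map of a finite-dimensional space, for which
injectivity gives surjectivity.
-/

open Finset

/-- `id - C ∘ B` is an injective, hence surjective, endomorphism of `W`; a solution of
`w - C (B w) = C g` gives the preimage `g + B w` of `g`. -/
theorem LinearMap.bijective_id_sub_comp_of_injective {K V W : Type*} [Field K]
    [AddCommGroup V] [Module K V] [AddCommGroup W] [Module K W] [FiniteDimensional K W]
    (B : W →ₗ[K] V) (C : V →ₗ[K] W)
    (hinj : Function.Injective ((LinearMap.id : V →ₗ[K] V) - B ∘ₗ C)) :
    Function.Bijective ((LinearMap.id : V →ₗ[K] V) - B ∘ₗ C) := by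
  refine ⟨hinj, fun g => ?_⟩
  have hT : Function.Injective ((LinearMap.id : W →ₗ[K] W) - C ∘ₗ B) := by
    refine (injective_iff_map_eq_zero _).2 fun w hw => ?_
    have hCB : C (B w) = w := (sub_eq_zero.1 (by simpa using hw)).symm
    have hBw : B w = 0 := (injective_iff_map_eq_zero _).1 hinj (B w) (by simp [hCB])
    rw [← hCB, hBw, map_zero]
  obtain ⟨w, hw⟩ := LinearMap.injective_iff_surjective.1 hT (C g)
  have hCv : C (g + B w) = w := by
    simp only [LinearMap.sub_apply, LinearMap.id_apply, LinearMap.comp_apply] at hw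
    rw [map_add, ← hw, sub_add_cancel]
  exact ⟨g + B w, by simp [hCv]⟩

/-- `A` factors through the restriction map `(X → K) → (S → K)`. -/
theorem LinearMap.bijective_id_sub_of_eqOn_finset {K X : Type*} [Field K]
    (A : (X → K) →ₗ[K] (X → K)) (S : Finset X)
    (hA : ∀ v v', (∀ t ∈ S, v t = v' t) → A v = A v')
    (hinj : Function.Injective ((LinearMap.id : (X → K) →ₗ[K] (X → K)) - A)) :
    Function.Bijective ((LinearMap.id : (X → K) →ₗ[K] (X → K)) - A) := by
  let C : (X → K) →ₗ[K] (S → K) := LinearMap.funLeft K K Subtype.val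
  let B : (S → K) →ₗ[K] (X → K) := A ∘ₗ Function.ExtendByZero.linearMap K Subtype.val
  have hBC : B ∘ₗ C = A := by
    refine LinearMap.ext fun v => hA _ _ fun t ht => ?_
    exact Subtype.val_injective.extend_apply (fun s : S => v s) 0 ⟨t, ht⟩
  rw [← hBC] at hinj ⊢
  exact LinearMap.bijective_id_sub_comp_of_injective B C hinj

section supIcc

variable {a b : ℝ} {x y : ℝ → ℝ}

lemma supIcc_nonneg (a b : ℝ) (x : ℝ → ℝ) : 0 ≤ supIcc a b x :=
  Real.iSup_nonneg fun _ => abs_nonneg _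

lemma BddIcc.abs_le_supIcc (hx : BddIcc a b x) {t : ℝ} (ht : t ∈ Icc a b) :
    |x t| ≤ supIcc a b x := by
  obtain ⟨M, hM⟩ := hx
  exact le_ciSup (f := fun u : Icc a b => |x u.1|)
    ⟨M, by rintro y ⟨u, rfl⟩; exact hM u.1 u.2⟩ ⟨t, ht⟩

lemma supIcc_le (hab : a ≤ b) {M : ℝ} (h : ∀ t ∈ Icc a b, |x t| ≤ M) : supIcc a b x ≤ M :=
  have : Nonempty (Icc a b) := ⟨⟨a, le_rfl, hab⟩⟩
  ciSup_le fun t => h t.1 t.2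

lemma supIcc_zero (hab : a ≤ b) : supIcc a b 0 = 0 :=
  le_antisymm (supIcc_le hab fun _ _ => by simp) (supIcc_nonneg a b 0)

lemma BddIcc.eqOn_zero (hx : BddIcc a b x) (h0 : supIcc a b x ≤ 0) :
    ∀ t ∈ Icc a b, x t = 0 :=
  fun _ ht => abs_nonpos_iff.1 ((hx.abs_le_supIcc ht).trans h0)

lemma BddIcc.add (hx : BddIcc a b x) (hy : BddIcc a b y) : BddIcc a b (x + y) := by
  obtain ⟨M, hM⟩ := hx
  obtain ⟨N, hN⟩ := hy
  exact ⟨M + N, fun t ht => (abs_add_le _ _).trans (add_le_add (hM t ht) (hN t ht))⟩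

lemma BddIcc.sub (hx : BddIcc a b x) (hy : BddIcc a b y) : BddIcc a b (x - y) := by
  obtain ⟨M, hM⟩ := hx
  obtain ⟨N, hN⟩ := hy
  exact ⟨M + N, fun t ht => (abs_sub _ _).trans (add_le_add (hM t ht) (hN t ht))⟩

lemma Continuous.bddIcc (hx : Continuous x) : BddIcc a b x := by
  obtain ⟨C, hC⟩ := isCompact_Icc.exists_bound_of_continuousOn hx.continuousOn (s := Icc a b)
  exact ⟨C, fun t ht => by simpa using hC t ht⟩

lemma pos_of_forall_supIcc_le_mul (hab : a ≤ b) {C : ℝ} {T : (ℝ → ℝ) → ℝ → ℝ}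
    (h : ∀ v, BddIcc a b v → supIcc a b v ≤ C * supIcc a b (v - T v)) : 0 < C := by
  have h1 : BddIcc a b 1 := ⟨1, fun _ _ => by simp⟩
  have hone : 1 ≤ supIcc a b 1 := by simpa using h1.abs_le_supIcc ⟨le_rfl, hab⟩
  have := h 1 h1
  by_contra! hC
  nlinarith [mul_nonpos_of_nonpos_of_nonneg hC (supIcc_nonneg a b (1 - T 1))]

lemma supIcc_le_two_mul_of_perturb (hab : a ≤ b) {C : ℝ} (hC : 0 < C) {v Tv T'v : ℝ → ℝ}
    (hv : BddIcc a b v) (hT'v : BddIcc a b T'v)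
    (hstab : supIcc a b v ≤ C * supIcc a b (v - Tv))
    (hclose : ∀ t ∈ Icc a b, |T'v t - Tv t| ≤ (2 * C)⁻¹ * supIcc a b v) :
    supIcc a b v ≤ 2 * C * supIcc a b (v - T'v) := by
  have hsub : supIcc a b (v - Tv) ≤ supIcc a b (v - T'v) + (2 * C)⁻¹ * supIcc a b v := by
    refine supIcc_le hab fun t ht => ?_
    have h := (hv.sub hT'v).abs_le_supIcc ht
    simp only [Pi.sub_apply] at h ⊢
    calc |v t - Tv t| = |(v t - T'v t) + (T'v t - Tv t)| := by ring_nf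
      _ ≤ _ := (abs_add_le _ _).trans (add_le_add h (hclose t ht))
  have hhalf : C * ((2 * C)⁻¹ * supIcc a b v) = supIcc a b v / 2 := by field_simp
  have := hstab.trans (mul_le_mul_of_nonneg_left hsub hC.le)
  rw [mul_add, hhalf] at this
  linarith

end supIcc

section Nodes

variable {a b : ℝ} {n k : ℕ}

/-- `[t_k, t_{k+1}]`: cells are indexed from `0`, as in `cNode` and `iIdx`. -/
def cell (a b : ℝ) (n k : ℕ) : Set ℝ :=
  Icc (a + k * ((b - a) / n)) (a + k * ((b - a) / n) + (b - a) / n)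

lemma cNode_mem_cell {r : ℕ} (hab : a ≤ b) {q : Fin r → ℝ} (hq : ∀ i, q i ∈ Ioo (0 : ℝ) 1)
    (n k : ℕ) (i : Fin r) : cNode a b q n k i ∈ cell a b n k := by
  have hh : 0 ≤ (b - a) / n := div_nonneg (by linarith) n.cast_nonneg
  obtain ⟨h0, h1⟩ := hq i
  constructor <;> simp only [cNode] <;> nlinarith

lemma cell_subset_Icc (hab : a ≤ b) (hk : k < n) : cell a b n k ⊆ Icc a b := by
  have hn : (0 : ℝ) < n := by exact_mod_cast k.zero_le.trans_lt hk
  have hh : 0 ≤ (b - a) / n := div_nonneg (by linarith) hn.le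
  have hkn : (k : ℝ) + 1 ≤ n := by exact_mod_cast hk
  have hba : (n : ℝ) * ((b - a) / n) = b - a := by field_simp
  rintro t ⟨ht1, ht2⟩
  constructor <;> nlinarith [mul_le_mul_of_nonneg_right hkn hh]

lemma abs_sub_le_of_mem_cell {s t : ℝ} (hs : s ∈ cell a b n k) (ht : t ∈ cell a b n k) :
    |s - t| ≤ (b - a) / n :=
  abs_sub_le_iff.2 ⟨by linarith [hs.2, ht.1], by linarith [hs.1, ht.2]⟩

lemma cNode_mem_Icc {r : ℕ} (hab : a ≤ b) {q : Fin r → ℝ} (hq : ∀ i, q i ∈ Ioo (0 : ℝ) 1)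
    (hk : k < n) (i : Fin r) : cNode a b q n k i ∈ Icc a b :=
  cell_subset_Icc hab hk (cNode_mem_cell hab hq n k i)

/-- `qNode a b μ` is definitionally `cNode a b μ`. -/
lemma qNode_mem_Icc {ρ m j : ℕ} (hab : a ≤ b) {μ : Fin ρ → ℝ} (hμ : ∀ i, μ i ∈ Ioo (0 : ℝ) 1)
    (hj : j < m) (i : Fin ρ) : qNode a b μ m j i ∈ Icc a b :=
  cNode_mem_Icc hab hμ hj i

lemma iIdx_lt (hn : 0 < n) (t : ℝ) : iIdx a b n t < n :=
  (min_le_left _ _).trans_lt (Nat.sub_lt hn one_pos)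

lemma mem_cell_iIdx (hab : a < b) (hn : 0 < n) {t : ℝ} (ht : t ∈ Icc a b) :
    t ∈ cell a b n (iIdx a b n t) := by
  have hn' : (0 : ℝ) < n := by exact_mod_cast hn
  set h := (b - a) / n with hdef
  have hh : 0 < h := div_pos (by linarith) hn'
  set u := (t - a) / h
  have hu0 : 0 ≤ u := div_nonneg (by linarith [ht.1]) hh.le
  have hun : u ≤ n := by
    rw [div_le_iff₀ hh, hdef, mul_div_cancel₀ _ hn'.ne']
    linarith [ht.2]
  have huh : u * h = t - a := div_mul_cancel₀ _ hh.ne'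
  have hfloor : ((⌊u⌋.toNat : ℕ) : ℝ) = ⌊u⌋ := by
    exact_mod_cast Int.toNat_of_nonneg (Int.floor_nonneg.2 hu0)
  have hk1 : (iIdx a b n t : ℝ) ≤ u := by
    have : (iIdx a b n t : ℝ) ≤ (⌊u⌋.toNat : ℕ) := by exact_mod_cast min_le_right _ _
    exact this.trans (hfloor ▸ Int.floor_le u)
  have hk2 : u ≤ (iIdx a b n t : ℝ) + 1 := by
    rcases le_or_gt ⌊u⌋.toNat (n - 1) with hc | hc
    · rw [iIdx, ← hdef, min_eq_right hc, hfloor]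
      exact (Int.lt_floor_add_one u).le
    · rw [iIdx, ← hdef, min_eq_left hc.le, Nat.cast_sub hn, Nat.cast_one]
      linarith
  constructor <;> nlinarith [mul_le_mul_of_nonneg_right hk1 hh.le,
    mul_le_mul_of_nonneg_right hk2 hh.le]

end Nodes

section Interpolation

variable {r : ℕ} {a b : ℝ} {q : Fin r → ℝ} {n k : ℕ}

/-- On a cell, `|ℓ_i(t)| ≤ ∏_{j ≠ i} |q_i - q_j|⁻¹` because `|t - τ_j| ≤ h`; summing over `i`
bounds the Lebesgue constant of `projQ` independently of `n`. -/
def lebesgueBound (q : Fin r → ℝ) : ℝ := ∑ i, (∏ j ∈ univ.erase i, |q i - q j|)⁻¹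

lemma lebesgueBound_nonneg (q : Fin r → ℝ) : 0 ≤ lebesgueBound q :=
  sum_nonneg fun _ _ => inv_nonneg.2 (prod_nonneg fun _ _ => abs_nonneg _)

lemma projQ_apply (a b : ℝ) (q : Fin r → ℝ) (n : ℕ) (x : ℝ → ℝ) (t : ℝ) :
    projQ a b q n x t = ∑ i, x (cNode a b q n (iIdx a b n t) i) *
      (Lagrange.basis univ (cNode a b q n (iIdx a b n t)) i).eval t := by
  simp [projQ, Lagrange.interpolate_apply, Polynomial.eval_finsetSum]

lemma cNode_injective (hab : a < b) (hn : 0 < n) (hq : Function.Injective q) (k : ℕ) :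
    Function.Injective (cNode a b q n k) := by
  have hh : (b - a) / n ≠ 0 := (div_pos (by linarith) (by exact_mod_cast hn)).ne'
  intro i j hij
  exact hq (mul_right_cancel₀ hh (by simp only [cNode] at hij; linarith))

lemma abs_lagrangeBasis_eval_le (hab : a < b) (hn : 0 < n) (hq : ∀ i, q i ∈ Ioo (0 : ℝ) 1)
    {t : ℝ} (ht : t ∈ cell a b n k) (i : Fin r) :
    |(Lagrange.basis univ (cNode a b q n k) i).eval t| ≤
      (∏ j ∈ univ.erase i, |q i - q j|)⁻¹ := by
  have hh : 0 < (b - a) / n := div_pos (by linarith) (by exact_mod_cast hn)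
  rw [Lagrange.basis, Polynomial.eval_prod, abs_prod, ← prod_inv_distrib]
  refine prod_le_prod (fun _ _ => abs_nonneg _) fun j _ => ?_
  have hdiff : cNode a b q n k i - cNode a b q n k j = (q i - q j) * ((b - a) / n) := by
    simp only [cNode]; ring
  have htj : |t - cNode a b q n k j| ≤ (b - a) / n :=
    abs_sub_le_of_mem_cell ht (cNode_mem_cell hab.le hq n k j)
  simp only [Lagrange.basisDivisor, Polynomial.eval_mul, Polynomial.eval_C,
    Polynomial.eval_sub, Polynomial.eval_X, abs_mul, abs_inv, hdiff, abs_of_pos hh, mul_inv]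
  calc |q i - q j|⁻¹ * ((b - a) / n)⁻¹ * |t - cNode a b q n k j|
      ≤ |q i - q j|⁻¹ * ((b - a) / n)⁻¹ * ((b - a) / n) := by gcongr
    _ = |q i - q j|⁻¹ := by rw [mul_assoc, inv_mul_cancel₀ hh.ne', mul_one]

lemma abs_sum_mul_lagrangeBasis_le (hab : a < b) (hn : 0 < n) (hq : ∀ i, q i ∈ Ioo (0 : ℝ) 1)
    {t : ℝ} (ht : t ∈ cell a b n k) {c : Fin r → ℝ} {M : ℝ} (hc : ∀ i, |c i| ≤ M) :
    |∑ i, c i * (Lagrange.basis univ (cNode a b q n k) i).eval t| ≤ lebesgueBound q * M := by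
  rw [lebesgueBound, sum_mul]
  refine (abs_sum_le_sum_abs _ _).trans (sum_le_sum fun i _ => ?_)
  rw [abs_mul, mul_comm _ M]
  exact mul_le_mul (hc i) (abs_lagrangeBasis_eval_le hab hn hq ht i) (abs_nonneg _)
    ((abs_nonneg _).trans (hc i))

lemma abs_projQ_le (hab : a < b) (hn : 0 < n) (hq : ∀ i, q i ∈ Ioo (0 : ℝ) 1) {x : ℝ → ℝ}
    {M : ℝ} (hx : ∀ k < n, ∀ i, |x (cNode a b q n k i)| ≤ M) {t : ℝ} (ht : t ∈ Icc a b) :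
    |projQ a b q n x t| ≤ lebesgueBound q * M := by
  rw [projQ_apply]
  exact abs_sum_mul_lagrangeBasis_le hab hn hq (mem_cell_iIdx hab hn ht)
    (hx _ (iIdx_lt hn t))

/-- Interpolation reproduces constants, so the interpolation error at `t` is controlled by the
oscillation of `g` over distances `≤ h`. -/
lemma abs_projQ_sub_le (hr : 1 ≤ r) (hab : a < b) (hn : 0 < n) (hqi : Function.Injective q)
    (hq : ∀ i, q i ∈ Ioo (0 : ℝ) 1) {g : ℝ → ℝ} {e t : ℝ} (ht : t ∈ Icc a b)
    (hg : ∀ s ∈ Icc a b, |s - t| ≤ (b - a) / n → |g s - g t| ≤ e) :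
    |projQ a b q n g t - g t| ≤ lebesgueBound q * e := by
  set k := iIdx a b n t
  have htk := mem_cell_iIdx hab hn ht
  have : Nonempty (Fin r) := ⟨⟨0, hr⟩⟩
  have hsum : ∑ i, (Lagrange.basis univ (cNode a b q n k) i).eval t = 1 := by
    simpa [Polynomial.eval_finsetSum] using congrArg (Polynomial.eval t)
      (Lagrange.sum_basis (cNode_injective hab hn hqi k).injOn univ_nonempty)
  have hrw : projQ a b q n g t - g t =
      ∑ i, (g (cNode a b q n k i) - g t) * (Lagrange.basis univ (cNode a b q n k) i).eval t := by
    simp only [projQ_apply, sub_mul, sum_sub_distrib, ← mul_sum, hsum, mul_one, k]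
  rw [hrw]
  refine abs_sum_mul_lagrangeBasis_le hab hn hq htk fun i => hg _ ?_ ?_
  · exact cNode_mem_Icc hab.le hq (iIdx_lt hn t) i
  · exact abs_sub_le_of_mem_cell (cNode_mem_cell hab.le hq n k i) htk

end Interpolation

section Nystrom

variable {ρ : ℕ} {a b : ℝ} {w μ : Fin ρ → ℝ} {m : ℕ} {κ : ℝ → ℝ → ℝ → ℝ}

lemma Wsum_nonneg (w : Fin ρ → ℝ) : 0 ≤ Wsum w := sum_nonneg fun i _ => abs_nonneg (w i)

lemma abs_nyst_sum_le (hab : a ≤ b) (w : Fin ρ → ℝ) {F : ℕ → Fin ρ → ℝ} {C : ℝ} (hC : 0 ≤ C)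
    (hF : ∀ j < m, ∀ i, |F j i| ≤ C) :
    |(b - a) / m * ∑ j ∈ range m, ∑ i, w i * F j i| ≤ (b - a) * Wsum w * C := by
  rcases m.eq_zero_or_pos with rfl | hm
  · simpa using mul_nonneg (mul_nonneg (sub_nonneg.2 hab) (Wsum_nonneg w)) hC
  have hm' : (0 : ℝ) < m := by exact_mod_cast hm
  have hinner : ∀ j ∈ range m, |∑ i, w i * F j i| ≤ Wsum w * C := fun j hj => by
    rw [Wsum, sum_mul]
    refine (abs_sum_le_sum_abs _ _).trans (sum_le_sum fun i _ => ?_)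
    rw [abs_mul]
    exact mul_le_mul_of_nonneg_left (hF j (mem_range.1 hj) i) (abs_nonneg _)
  calc |(b - a) / m * ∑ j ∈ range m, ∑ i, w i * F j i|
      ≤ (b - a) / m * ∑ _j ∈ range m, Wsum w * C := by
        rw [abs_mul, abs_of_nonneg (div_nonneg (sub_nonneg.2 hab) hm'.le)]
        gcongr
        exact (abs_sum_le_sum_abs _ _).trans (sum_le_sum hinner)
    _ = (b - a) * Wsum w * C := by
        rw [sum_const, card_range, nsmul_eq_mul]
        field_simp

lemma abs_nystU'_sub_le (hab : a ≤ b) {x v : ℝ → ℝ} {s s' e V : ℝ} (he : 0 ≤ e) (hV : 0 ≤ V)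
    (hdu : ∀ j < m, ∀ i, |du κ s (qNode a b μ m j i) (x (qNode a b μ m j i))
        - du κ s' (qNode a b μ m j i) (x (qNode a b μ m j i))| ≤ e)
    (hv : ∀ j < m, ∀ i, |v (qNode a b μ m j i)| ≤ V) :
    |nystU' a b w μ m κ x v s - nystU' a b w μ m κ x v s'| ≤ (b - a) * Wsum w * (e * V) := by
  have hrw : nystU' a b w μ m κ x v s - nystU' a b w μ m κ x v s' =
      (b - a) / m * ∑ j ∈ range m, ∑ i, w i *
        ((du κ s (qNode a b μ m j i) (x (qNode a b μ m j i))
          - du κ s' (qNode a b μ m j i) (x (qNode a b μ m j i))) * v (qNode a b μ m j i)) := by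
    simp only [nystU', du, ← mul_sub, ← sum_sub_distrib]
    congr 1
    exact sum_congr rfl fun j _ => sum_congr rfl fun i _ => by ring
  rw [hrw]
  refine abs_nyst_sum_le hab w (mul_nonneg he hV) fun j hj i => ?_
  rw [abs_mul]
  exact mul_le_mul (hdu j hj i) (hv j hj i) (abs_nonneg _) he

lemma continuous_nystU' (a b : ℝ) (w μ : Fin ρ → ℝ) (m : ℕ)
    (hdu : Continuous fun v : ℝ × ℝ × ℝ => du κ v.1 v.2.1 v.2.2) (x v : ℝ → ℝ) :
    Continuous (nystU' a b w μ m κ x v) := by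
  refine continuous_const.mul (continuous_finsetSum _ fun j _ => continuous_finsetSum _
    fun i _ => (continuous_const.mul ?_).mul continuous_const)
  exact hdu.comp (continuous_id.prodMk
    (continuous_const (y := (qNode a b μ m j i, x (qNode a b μ m j i)))))

lemma nystU'_congr {x v v' : ℝ → ℝ}
    (h : ∀ j < m, ∀ i, v (qNode a b μ m j i) = v' (qNode a b μ m j i)) :
    nystU' a b w μ m κ x v = nystU' a b w μ m κ x v' := by
  funext s
  simp only [nystU']
  congr 1
  exact sum_congr rfl fun j hj => sum_congr rfl fun i _ => by rw [h j (mem_range.1 hj) i]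

end Nystrom

section Modified

variable {ρ r : ℕ} {a b : ℝ} {w μ : Fin ρ → ℝ} {q : Fin r → ℝ} {n m : ℕ}
  {κ : ℝ → ℝ → ℝ → ℝ}

def projQₗ (a b : ℝ) (q : Fin r → ℝ) (n : ℕ) : (ℝ → ℝ) →ₗ[ℝ] (ℝ → ℝ) where
  toFun := projQ a b q n
  map_add' x y := by
    funext t
    simp only [projQ_apply, Pi.add_apply, add_mul, sum_add_distrib]
  map_smul' c x := by
    funext t
    simp only [projQ_apply, Pi.smul_apply, smul_eq_mul, mul_sum, mul_assoc, RingHom.id_apply]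

def nystU'ₗ (a b : ℝ) (w μ : Fin ρ → ℝ) (m : ℕ) (κ : ℝ → ℝ → ℝ → ℝ) (x : ℝ → ℝ) :
    (ℝ → ℝ) →ₗ[ℝ] (ℝ → ℝ) where
  toFun := nystU' a b w μ m κ x
  map_add' v v' := by
    funext s
    simp only [nystU', Pi.add_apply, mul_add, sum_add_distrib]
  map_smul' c v := by
    funext s
    simp only [nystU', Pi.smul_apply, smul_eq_mul, mul_sum, RingHom.id_apply]
    exact sum_congr rfl fun j _ => sum_congr rfl fun i _ => by ring

def modU'ₗ (a b : ℝ) (w μ : Fin ρ → ℝ) (q : Fin r → ℝ) (n m : ℕ) (κ : ℝ → ℝ → ℝ → ℝ)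
    (x : ℝ → ℝ) : (ℝ → ℝ) →ₗ[ℝ] (ℝ → ℝ) :=
  projQₗ a b q n ∘ₗ nystU'ₗ a b w μ m κ x
    + nystU'ₗ a b w μ m κ (projQ a b q n x) ∘ₗ projQₗ a b q n
    - projQₗ a b q n ∘ₗ nystU'ₗ a b w μ m κ (projQ a b q n x) ∘ₗ projQₗ a b q n

lemma projQ_congr (hn : 0 < n) {x y : ℝ → ℝ}
    (h : ∀ k < n, ∀ i, x (cNode a b q n k i) = y (cNode a b q n k i)) :
    projQ a b q n x = projQ a b q n y := by
  funext t
  simp only [projQ_apply, h _ (iIdx_lt hn t)]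

lemma modU'_congr (hn : 0 < n) {x v v' : ℝ → ℝ}
    (hqn : ∀ j < m, ∀ i, v (qNode a b μ m j i) = v' (qNode a b μ m j i))
    (hcn : ∀ k < n, ∀ i, v (cNode a b q n k i) = v' (cNode a b q n k i)) :
    modU' a b w μ q n m κ x v = modU' a b w μ q n m κ x v' := by
  rw [modU', modU', nystU'_congr hqn, projQ_congr hn hcn]

lemma BddIcc.projQ (hab : a < b) (hn : 0 < n) (hq : ∀ i, q i ∈ Ioo (0 : ℝ) 1) {x : ℝ → ℝ}
    (hx : BddIcc a b x) : BddIcc a b (projQ a b q n x) :=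
  ⟨_, fun _ ht => abs_projQ_le hab hn hq
    (fun _ hk i => hx.abs_le_supIcc (cNode_mem_Icc hab.le hq hk i)) ht⟩

lemma bddIcc_modU' (hab : a < b) (hn : 0 < n) (hq : ∀ i, q i ∈ Ioo (0 : ℝ) 1)
    (hdu : Continuous fun v : ℝ × ℝ × ℝ => du κ v.1 v.2.1 v.2.2) (x v : ℝ → ℝ) :
    BddIcc a b (modU' a b w μ q n m κ x v) := by
  have h₁ := (continuous_nystU' a b w μ m hdu x v).bddIcc (a := a) (b := b)
  have h₂ := (continuous_nystU' a b w μ m hdu (projQ a b q n x) (projQ a b q n v)).bddIcc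
    (a := a) (b := b)
  exact ((h₁.projQ hab hn hq).add h₂).sub (h₂.projQ hab hn hq)

lemma abs_projQ_nystU'_sub_le (hr : 1 ≤ r) (hab : a < b) (hn : 0 < n)
    (hqi : Function.Injective q) (hq : ∀ i, q i ∈ Ioo (0 : ℝ) 1) (hμ : ∀ i, μ i ∈ Ioo (0 : ℝ) 1)
    {c e : ℝ} (he : 0 ≤ e) (hosc : ∀ s ∈ Icc a b, ∀ s' ∈ Icc a b, |s - s'| ≤ (b - a) / n →
      ∀ ζ ∈ Icc a b, ∀ u, |u| ≤ c → |du κ s ζ u - du κ s' ζ u| ≤ e)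
    {x v : ℝ → ℝ} {V t : ℝ} (hV : 0 ≤ V) (hx : ∀ j < m, ∀ i, |x (qNode a b μ m j i)| ≤ c)
    (hv : ∀ j < m, ∀ i, |v (qNode a b μ m j i)| ≤ V) (ht : t ∈ Icc a b) :
    |projQ a b q n (nystU' a b w μ m κ x v) t - nystU' a b w μ m κ x v t| ≤
      lebesgueBound q * ((b - a) * Wsum w * (e * V)) :=
  abs_projQ_sub_le hr hab hn hqi hq ht fun _ hs hst => abs_nystU'_sub_le hab.le he hV
    (fun j hj i => hosc _ hs _ ht hst _ (qNode_mem_Icc hab.le hμ hj i) _ (hx j hj i)) hv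

lemma abs_modU'_sub_nystU'_le (hr : 1 ≤ r) (hab : a < b) (hn : 0 < n)
    (hqi : Function.Injective q) (hq : ∀ i, q i ∈ Ioo (0 : ℝ) 1) (hμ : ∀ i, μ i ∈ Ioo (0 : ℝ) 1)
    {φ : ℝ → ℝ} {B e : ℝ} (hφ : ∀ t ∈ Icc a b, |φ t| ≤ B) (he : 0 ≤ e)
    (hosc : ∀ s ∈ Icc a b, ∀ s' ∈ Icc a b, |s - s'| ≤ (b - a) / n →
      ∀ ζ ∈ Icc a b, ∀ u, |u| ≤ (1 + lebesgueBound q) * B → |du κ s ζ u - du κ s' ζ u| ≤ e)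
    {v : ℝ → ℝ} (hv : BddIcc a b v) {t : ℝ} (ht : t ∈ Icc a b) :
    |modU' a b w μ q n m κ φ v t - nystU' a b w μ m κ φ v t| ≤
      lebesgueBound q * (1 + lebesgueBound q) * (b - a) * Wsum w * e * supIcc a b v := by
  set Λ := lebesgueBound q
  have hΛ := lebesgueBound_nonneg q
  have hB : 0 ≤ B := (abs_nonneg _).trans (hφ a ⟨le_rfl, hab.le⟩)
  have hvq : ∀ j < m, ∀ i, |v (qNode a b μ m j i)| ≤ supIcc a b v :=
    fun j hj i => hv.abs_le_supIcc (qNode_mem_Icc hab.le hμ hj i)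
  have hvc : ∀ k < n, ∀ i, |v (cNode a b q n k i)| ≤ supIcc a b v :=
    fun k hk i => hv.abs_le_supIcc (cNode_mem_Icc hab.le hq hk i)
  have hφc : ∀ k < n, ∀ i, |φ (cNode a b q n k i)| ≤ B :=
    fun k hk i => hφ _ (cNode_mem_Icc hab.le hq hk i)
  have hE₁ := abs_projQ_nystU'_sub_le (w := w) hr hab hn hqi hq hμ he hosc
    (supIcc_nonneg a b v) (fun j hj i => (hφ _ (qNode_mem_Icc hab.le hμ hj i)).trans
      (le_mul_of_one_le_left hB (le_add_of_nonneg_right hΛ))) hvq ht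
  have hE₂ := abs_projQ_nystU'_sub_le (w := w) (m := m) hr hab hn hqi hq hμ he hosc
    (mul_nonneg hΛ (supIcc_nonneg a b v))
    (fun j hj i => (abs_projQ_le hab hn hq hφc (qNode_mem_Icc hab.le hμ hj i)).trans
      (by nlinarith)) (fun j hj i => abs_projQ_le hab hn hq hvc (qNode_mem_Icc hab.le hμ hj i))
    ht
  have hdec : modU' a b w μ q n m κ φ v t - nystU' a b w μ m κ φ v t =
      (projQ a b q n (nystU' a b w μ m κ φ v) t - nystU' a b w μ m κ φ v t) -
      (projQ a b q n (nystU' a b w μ m κ (projQ a b q n φ) (projQ a b q n v)) t -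
        nystU' a b w μ m κ (projQ a b q n φ) (projQ a b q n v) t) := by
    simp only [modU', Pi.add_apply, Pi.sub_apply]
    ring
  rw [hdec]
  refine (abs_sub _ _).trans ((add_le_add hE₁ hE₂).trans_eq ?_)
  ring

end Modified

section Stability

variable {ρ r : ℕ} {a b : ℝ} {w μ : Fin ρ → ℝ} {q : Fin r → ℝ} {κ : ℝ → ℝ → ℝ → ℝ}

lemma exists_pos_forall_abs_du_sub_le
    (hdu : Continuous fun v : ℝ × ℝ × ℝ => du κ v.1 v.2.1 v.2.2) (a b c : ℝ) {e : ℝ}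
    (he : 0 < e) :
    ∃ δ > 0, ∀ s ∈ Icc a b, ∀ s' ∈ Icc a b, |s - s'| ≤ δ →
      ∀ ζ ∈ Icc a b, ∀ u, |u| ≤ c → |du κ s ζ u - du κ s' ζ u| ≤ e := by
  have hK : IsCompact (Icc a b ×ˢ Icc a b ×ˢ Icc (-c) c) :=
    isCompact_Icc.prod (isCompact_Icc.prod isCompact_Icc)
  have hUC := hK.uniformContinuousOn_of_continuous hdu.continuousOn
  obtain ⟨δ, hδ, hUC⟩ := Metric.uniformContinuousOn_iff_le.1 hUC e he
  refine ⟨δ, hδ, fun s hs s' hs' hss' ζ hζ u hu => ?_⟩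
  have hu' : u ∈ Icc (-c) c := abs_le.1 hu
  have hdist : dist (s, ζ, u) (s', ζ, u) ≤ δ := by
    simpa [Prod.dist_eq, Real.dist_eq, hδ.le] using hss'
  simpa [Real.dist_eq] using hUC _ ⟨hs, hζ, hu'⟩ _ ⟨hs', hζ, hu'⟩ hdist

lemma exists_forall_abs_modU'_sub_nystU'_le (hr : 1 ≤ r) (hab : a < b)
    (hqi : Function.Injective q) (hq : ∀ i, q i ∈ Ioo (0 : ℝ) 1) (hμ : ∀ i, μ i ∈ Ioo (0 : ℝ) 1)
    (hdu : Continuous fun v : ℝ × ℝ × ℝ => du κ v.1 v.2.1 v.2.2) {φ : ℝ → ℝ}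
    (hφ : Continuous φ) {ε : ℝ} (hε : 0 < ε) :
    ∃ n₁ : ℕ, 0 < n₁ ∧ ∀ n, n₁ ≤ n → ∀ m v, BddIcc a b v → ∀ t ∈ Icc a b,
      |modU' a b w μ q n m κ φ v t - nystU' a b w μ m κ φ v t| ≤ ε * supIcc a b v := by
  obtain ⟨B, hB⟩ : BddIcc a b φ := hφ.bddIcc
  set X := lebesgueBound q * (1 + lebesgueBound q) * (b - a) * Wsum w
  have hX : 0 ≤ X := by
    have := lebesgueBound_nonneg q
    have := Wsum_nonneg w
    have : 0 ≤ b - a := by linarith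
    positivity
  have he : 0 < ε / (X + 1) := by positivity
  have hXe : X * (ε / (X + 1)) ≤ ε := by
    rw [mul_div_assoc', div_le_iff₀ (by linarith)]
    nlinarith
  obtain ⟨δ, hδ, hosc⟩ := exists_pos_forall_abs_du_sub_le hdu a b ((1 + lebesgueBound q) * B) he
  obtain ⟨n₀, hn₀⟩ := exists_nat_gt ((b - a) / δ)
  refine ⟨max 1 n₀, by positivity, fun n hn m v hv t ht => ?_⟩
  have hn0 : 0 < n := (lt_max_of_lt_left one_pos).trans_le hn
  have hnδ : (b - a) / n ≤ δ := by
    have : (n₀ : ℝ) ≤ n := by exact_mod_cast (le_max_right 1 n₀).trans hn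
    rw [div_le_iff₀ (by exact_mod_cast hn0)]
    rw [div_lt_iff₀ hδ] at hn₀
    nlinarith
  refine (abs_modU'_sub_nystU'_le hr hab hn0 hqi hq hμ hB he.le
    (fun s hs s' hs' hss' => hosc s hs s' hs' (hss'.trans hnδ)) hv ht).trans ?_
  exact mul_le_mul_of_nonneg_right hXe (supIcc_nonneg a b v)

def modNodes {ρ r : ℕ} (a b : ℝ) (μ : Fin ρ → ℝ) (q : Fin r → ℝ) (n m : ℕ) : Finset ℝ :=
  (range m ×ˢ Finset.univ).image (fun p : ℕ × Fin ρ => qNode a b μ m p.1 p.2) ∪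
    (range n ×ˢ Finset.univ).image (fun p : ℕ × Fin r => cNode a b q n p.1 p.2)

lemma modNodes_subset_Icc {n m : ℕ} (hab : a ≤ b) (hq : ∀ i, q i ∈ Ioo (0 : ℝ) 1)
    (hμ : ∀ i, μ i ∈ Ioo (0 : ℝ) 1) : ∀ t ∈ modNodes a b μ q n m, t ∈ Icc a b := by
  simp only [modNodes, Finset.mem_union, Finset.mem_image, Finset.mem_product, Finset.mem_range]
  rintro t (⟨⟨j, i⟩, ⟨hj, -⟩, rfl⟩ | ⟨⟨k, i⟩, ⟨hk, -⟩, rfl⟩)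
  exacts [qNode_mem_Icc hab hμ hj i, cNode_mem_Icc hab hq hk i]

lemma modU'_congr_modNodes {n m : ℕ} (hn : 0 < n) {x v v' : ℝ → ℝ}
    (h : ∀ t ∈ modNodes a b μ q n m, v t = v' t) :
    modU' a b w μ q n m κ x v = modU' a b w μ q n m κ x v' := by
  refine modU'_congr hn (fun j hj i => h _ ?_) (fun k hk i => h _ ?_)
  · exact mem_union_left _ (Finset.mem_image.2 ⟨(j, i), by simpa using hj, rfl⟩)
  · exact mem_union_right _ (Finset.mem_image.2 ⟨(k, i), by simpa using hk, rfl⟩)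

lemma existsUnique_sub_modU'_eq {n m : ℕ} (hab : a < b) (hn : 0 < n)
    (hq : ∀ i, q i ∈ Ioo (0 : ℝ) 1) (hμ : ∀ i, μ i ∈ Ioo (0 : ℝ) 1)
    (hdu : Continuous fun v : ℝ × ℝ × ℝ => du κ v.1 v.2.1 v.2.2) {φ : ℝ → ℝ} {C : ℝ}
    (hstab : ∀ v, BddIcc a b v →
      supIcc a b v ≤ C * supIcc a b (v - modU' a b w μ q n m κ φ v))
    {g : ℝ → ℝ} (hg : BddIcc a b g) :
    ∃! v : ℝ → ℝ, BddIcc a b v ∧ v - modU' a b w μ q n m κ φ v = g := by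
  set A := modU'ₗ a b w μ q n m κ φ
  have hA : ∀ v v', (∀ t ∈ modNodes a b μ q n m, v t = v' t) → A v = A v' :=
    fun _ _ => modU'_congr_modNodes hn
  have hinj : Function.Injective ((LinearMap.id : (ℝ → ℝ) →ₗ[ℝ] (ℝ → ℝ)) - A) := by
    refine (injective_iff_map_eq_zero _).2 fun v hv => ?_
    have hfix : v = A v := sub_eq_zero.1 hv
    have hvb : BddIcc a b v := hfix ▸ bddIcc_modU' hab hn hq hdu φ v
    have hsup : supIcc a b v ≤ 0 := by
      have h0 : v - modU' a b w μ q n m κ φ v = 0 := hv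
      have := hstab v hvb
      rwa [h0, supIcc_zero hab.le, mul_zero] at this
    rw [hfix, hA v 0 fun t ht => hvb.eqOn_zero hsup t (modNodes_subset_Icc hab.le hq hμ t ht),
      map_zero]
  have hbij := LinearMap.bijective_id_sub_of_eqOn_finset A _ hA hinj
  obtain ⟨v, hv⟩ := hbij.2 g
  have hv : v - A v = g := hv
  refine ⟨v, ⟨?_, hv⟩, fun v' hv' => hbij.1 (hv'.2.trans hv.symm)⟩
  rw [← sub_add_cancel v (A v), hv]
  exact hg.add (bddIcc_modU' hab hn hq hdu φ v)

end Stability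

theorem stmt9_general {ρ r : ℕ} (hr : 1 ≤ r) (w μ : Fin ρ → ℝ)
    (hμ : ∀ i, μ i ∈ Set.Ioo (0:ℝ) 1)
    (q : Fin r → ℝ) (hq : GaussPts q) (a b : ℝ) (hab : a < b)
    (κ : ℝ → ℝ → ℝ → ℝ)
    (h1 : Smooth1 κ)
    (φ : ℝ → ℝ) (hφc : Continuous φ)
    (p : ℕ)
    (m₁ : ℕ) (C₇ : ℝ)
    (hnorm : ∀ m, m₁ ≤ m → ∀ v : ℝ → ℝ, BddIcc a b v →
      supIcc a b v ≤ C₇ * supIcc a b (v - nystU' a b w μ m κ φ v)) :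
    ∃ n₁ : ℕ, ∀ n, n₁ ≤ n → m₁ ≤ n * p →
      (∀ g : ℝ → ℝ, BddIcc a b g →
        ∃! v : ℝ → ℝ, BddIcc a b v ∧ v - modU' a b w μ q n (n * p) κ φ v = g) ∧
      ∀ v : ℝ → ℝ, BddIcc a b v →
        supIcc a b v ≤ 2 * C₇ * supIcc a b (v - modU' a b w μ q n (n * p) κ φ v) := by
  obtain ⟨hqmono, hq, -⟩ := hq
  have hC₇ : 0 < C₇ := pos_of_forall_supIcc_le_mul hab.le (hnorm m₁ le_rfl)
  obtain ⟨n₁, hn₁, hclose⟩ := exists_forall_abs_modU'_sub_nystU'_le (w := w) hr hab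
    hqmono.injective hq hμ h1.2 hφc (inv_pos.2 (mul_pos two_pos hC₇))
  refine ⟨n₁, fun n hn hm => ?_⟩
  have hn0 : 0 < n := hn₁.trans_le hn
  have hstab : ∀ v, BddIcc a b v →
      supIcc a b v ≤ 2 * C₇ * supIcc a b (v - modU' a b w μ q n (n * p) κ φ v) :=
    fun v hv => supIcc_le_two_mul_of_perturb hab.le hC₇ hv (bddIcc_modU' hab hn0 hq h1.2 φ v)
      (hnorm _ hm v hv) (hclose n hn _ v hv)
  exact ⟨fun g hg => existsUnique_sub_modU'_eq hab hn0 hq hμ h1.2 hstab hg, hstab⟩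

/-- Proposition 4.3: invertibility of `I - (K̃ₙᴹ)'(φ)`. -/
theorem stmt9 {ρ r : ℕ} (hr : 1 ≤ r) (w μ : Fin ρ → ℝ)
    (hμ : ∀ i, μ i ∈ Set.Ioo (0:ℝ) 1) (hprec : Precision w μ (2 * r - 1))
    (q : Fin r → ℝ) (hq : GaussPts q) (a b : ℝ) (hab : a < b)
    (κ : ℝ → ℝ → ℝ → ℝ)
    (hκ : Continuous fun v : ℝ × ℝ × ℝ => κ v.1 v.2.1 v.2.2)
    (h1 : Smooth1 κ) (h2 : Smooth2 κ)
    (f : ℝ → ℝ) (hf : Continuous f)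
    (φ : ℝ → ℝ) (hφc : Continuous φ)
    (hφ : ∀ s, φ s - ∫ t in a..b, κ s t (φ t) = f s)
    (p : ℕ) (hp : 1 ≤ p)
    (m₁ : ℕ) (C₇ : ℝ)
    (hbij : ∀ m, m₁ ≤ m → ∀ g : ℝ → ℝ, BddIcc a b g →
      ∃! v : ℝ → ℝ, BddIcc a b v ∧ v - nystU' a b w μ m κ φ v = g)
    (hnorm : ∀ m, m₁ ≤ m → ∀ v : ℝ → ℝ, BddIcc a b v →
      supIcc a b v ≤ C₇ * supIcc a b (v - nystU' a b w μ m κ φ v)) :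
    ∃ n₁ : ℕ, ∀ n, n₁ ≤ n → m₁ ≤ n * p →
      (∀ g : ℝ → ℝ, BddIcc a b g →
        ∃! v : ℝ → ℝ, BddIcc a b v ∧ v - modU' a b w μ q n (n * p) κ φ v = g) ∧
      ∀ v : ℝ → ℝ, BddIcc a b v →
        supIcc a b v ≤ 2 * C₇ * supIcc a b (v - modU' a b w μ q n (n * p) κ φ v) :=
  stmt9_general hr w μ hμ q hq a b hab κ h1 φ hφc p m₁ C₇ hnorm
end
end
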